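/- For every p ∈ [1,∞) there exists a constant C > 0 such that for all s ∈ (0,2] and all x, y ∈ [0,1], Σ_{j∈ℤ} |j|^p q_s(x+j−y) / G_s(x−y) ≤ C, where q_s is the Gaussian heat kernel and G_s its periodization. -/
import Mathlib
open Real

/-- The standard heat kernel on `ℝ`. -/
noncomputable def heatKernel (t x : ℝ) : ℝ :=
  (1 / Real.sqrt (2 * Real.pi * t)) * Real.exp (-x ^ 2 / (2 * t))

/-- The heat kernel on the unit torus, obtained by periodization. -/
noncomputable def torusHeatKernel (t x : ℝ) : ℝ :=
  ∑' n : ℤ, heatKernel t (x + n)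

lemma heatKernel_pos {t : ℝ} (ht : 0 < t) (x : ℝ) : 0 < heatKernel t x := by
  have h : 0 < Real.sqrt (2 * Real.pi * t) := Real.sqrt_pos.2 (by positivity)
  exact mul_pos (div_pos one_pos h) (Real.exp_pos _)

lemma heatKernel_nonneg {t : ℝ} (ht : 0 < t) (x : ℝ) : 0 ≤ heatKernel t x :=
  (heatKernel_pos ht x).le

lemma summable_exp_neg_abs (c : ℝ) (hc : 0 < c) :
    Summable fun j : ℤ => Real.exp (-c * |(j : ℝ)|) := by
  have hgeo : Summable fun n : ℕ => Real.exp (-c) ^ n :=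
    summable_geometric_of_lt_one (Real.exp_pos _).le
      (Real.exp_lt_one_iff.2 (by linarith))
  apply Summable.of_nat_of_neg
  · refine hgeo.congr fun n => ?_
    rw [← Real.exp_nat_mul]
    congr 1
    rw [Int.cast_natCast, abs_of_nonneg (by positivity : (0:ℝ) ≤ (n:ℝ))]
    ring
  · refine hgeo.congr fun n => ?_
    rw [← Real.exp_nat_mul]
    congr 1
    push_cast
    rw [abs_neg, abs_of_nonneg (by positivity : (0:ℝ) ≤ (n:ℝ))]
    ring

lemma summable_aux (p : ℝ) (hp : 1 ≤ p) :
    Summable fun j : ℤ => |(j:ℝ)| ^ p * Real.exp (-(((j:ℝ))^2 - 1) / 16) := by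
  have hb : Summable fun j : ℤ =>
      Real.exp (1/16 + 8*p^2) * Real.exp (-(1/32) * |(j:ℝ)|) :=
    (summable_exp_neg_abs (1/32) (by norm_num)).mul_left _
  refine Summable.of_nonneg_of_le (fun j => by positivity) (fun j => ?_) hb
  rcases eq_or_ne j 0 with rfl | hj
  · simp only [Int.cast_zero, abs_zero]
    rw [Real.zero_rpow (by linarith : p ≠ 0), zero_mul]
    positivity
  · have h1 : (1:ℝ) ≤ |(j:ℝ)| := by
      have := Int.one_le_abs hj
      calc (1:ℝ) = ((1:ℤ):ℝ) := by norm_num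
        _ ≤ ((|j|:ℤ):ℝ) := by exact_mod_cast this
        _ = |(j:ℝ)| := by push_cast; ring
    have h0 : (0:ℝ) < |(j:ℝ)| := by linarith
    rw [Real.rpow_def_of_pos h0, ← Real.exp_add, ← Real.exp_add]
    apply Real.exp_le_exp.2
    have hlog : Real.log |(j:ℝ)| ≤ |(j:ℝ)| := by
      have := Real.log_le_sub_one_of_pos h0
      linarith
    have hlogp : Real.log |(j:ℝ)| * p ≤ |(j:ℝ)| * p :=
      mul_le_mul_of_nonneg_right hlog (by linarith)
    nlinarith [sq_nonneg (|(j:ℝ)| - 16*p), sq_abs ((j:ℝ)), mul_le_mul_of_nonneg_left h1 h0.le]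

lemma summable_heat {s z : ℝ} (hs : 0 < s) (hs2 : s ≤ 2) (hz : |z| ≤ 1) :
    Summable fun n : ℤ => heatKernel s (z + n) := by
  have hb : Summable fun n : ℤ =>
      (1 / Real.sqrt (2 * Real.pi * s) * Real.exp (1/s)) * Real.exp (-(1/8) * |(n:ℝ)|) :=
    (summable_exp_neg_abs (1/8) (by norm_num)).mul_left _
  refine Summable.of_nonneg_of_le (fun n => heatKernel_nonneg hs _) (fun n => ?_) hb
  unfold heatKernel
  conv_rhs => rw [mul_assoc, ← Real.exp_add]
  have hroot : (0:ℝ) ≤ 1 / Real.sqrt (2 * Real.pi * s) := by positivity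
  apply mul_le_mul_of_nonneg_left _ hroot
  apply Real.exp_le_exp.2
  set a := |(n:ℝ)| with ha
  have h2 : -a ≤ z * (n:ℝ) := by
    have h := neg_abs_le (z * (n:ℝ))
    rw [abs_mul] at h
    nlinarith [abs_nonneg (n:ℝ), hz, abs_nonneg z]
  rw [div_le_iff₀ (show (0:ℝ) < 2*s by linarith)]
  have hexp : (1/s + -(1/8) * a) * (2*s) = 2 - s*a/4 := by field_simp; ring
  rw [hexp]
  nlinarith [h2, sq_abs ((n:ℝ)), sq_nonneg (a - 5/4), sq_nonneg z,
    mul_le_mul_of_nonneg_right hs2 (abs_nonneg ((n:ℝ)))]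

lemma torus_ge {s z : ℝ} (hs : 0 < s) (hs2 : s ≤ 2) (hz : |z| ≤ 1) (n : ℤ) :
    heatKernel s (z + n) ≤ torusHeatKernel s z :=
  Summable.le_tsum (summable_heat hs hs2 hz) n (fun j _ => heatKernel_nonneg hs _)

lemma torus_ge' {s z : ℝ} (hs : 0 < s) (hs2 : s ≤ 2) (hz : |z| ≤ 1) :
    heatKernel s (z - round z) ≤ torusHeatKernel s z := by
  have h := torus_ge hs hs2 hz (-(round z))
  rw [show ((( -(round z) : ℤ)) : ℝ) = -((round z : ℤ) : ℝ) by push_cast; ring] at h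
  simpa [sub_eq_add_neg] using h

lemma torus_pos {s z : ℝ} (hs : 0 < s) (hs2 : s ≤ 2) (hz : |z| ≤ 1) :
    0 < torusHeatKernel s z :=
  lt_of_lt_of_le (heatKernel_pos hs _) (torus_ge' hs hs2 hz)

lemma heat_le {s z : ℝ} (hs : 0 < s) (hs2 : s ≤ 2) (hz : |z| ≤ 1) (j : ℤ) :
    heatKernel s (z + j) ≤ torusHeatKernel s z * Real.exp (-(((j:ℝ))^2 - 1) / 16) := by
  by_cases hj : ((j:ℝ))^2 ≤ 1
  · have h1 : heatKernel s (z + j) ≤ torusHeatKernel s z := torus_ge hs hs2 hz j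
    have h2 : (1:ℝ) ≤ Real.exp (-(((j:ℝ))^2 - 1) / 16) := by
      rw [Real.one_le_exp_iff]
      linarith
    have hD : 0 ≤ torusHeatKernel s z := (torus_pos hs hs2 hz).le
    calc heatKernel s (z + j) ≤ torusHeatKernel s z := h1
      _ = torusHeatKernel s z * 1 := by ring
      _ ≤ _ := mul_le_mul_of_nonneg_left h2 hD
  · push_neg at hj
    have hj2 : 2 ≤ |(j:ℝ)| := by
      have h1 : 1 < |j| := by
        by_contra h
        push_neg at h
        obtain ⟨hl, hr⟩ := abs_le.1 h
        interval_cases j <;> norm_num at hj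
      have : 2 ≤ |j| := by omega
      calc (2:ℝ) = ((2:ℤ):ℝ) := by norm_num
        _ ≤ ((|j|:ℤ):ℝ) := by exact_mod_cast this
        _ = |(j:ℝ)| := by push_cast; ring
    have hkey : heatKernel s (z + j) ≤
        heatKernel s (z - round z) * Real.exp (-(((j:ℝ))^2 - 1) / 16) := by
      unfold heatKernel
      conv_rhs => rw [mul_assoc, ← Real.exp_add]
      apply mul_le_mul_of_nonneg_left _ (by positivity)
      apply Real.exp_le_exp.2
      -- key numeric estimate
      have hround : (z - round z)^2 ≤ 1/4 := by
        have h := abs_sub_round z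
        have h2 := abs_nonneg (z - round z)
        nlinarith [sq_abs (z - round z)]
      have hu : ((j:ℝ))^2 / 4 ≤ (z + j)^2 := by
        have hb : |(j:ℝ)| - 1 ≤ |z + j| := by
          have := abs_sub_abs_le_abs_sub ((j:ℝ)) (-(z))
          simp only [abs_neg, sub_neg_eq_add] at this
          have h3 : |(j:ℝ)| - |z| ≤ |(j:ℝ) + z| := this
          rw [show (j:ℝ) + z = z + j by ring] at h3
          linarith
        have hb2 : |(j:ℝ)|/2 ≤ |z + (j:ℝ)| := by linarith
        have hm := mul_le_mul hb2 hb2 (by linarith) (abs_nonneg _)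
        nlinarith [sq_abs (z + (j:ℝ)), sq_abs ((j:ℝ))]
      have hdiff : (((j:ℝ))^2 - 1) / 16 ≤ ((z + j)^2 - (z - round z)^2) / (2*s) := by
        have h0 : (((j:ℝ))^2 - 1) / 16 ≤ (((j:ℝ))^2/4 - 1/4) / (2*s) := by
          rw [div_le_div_iff₀ (by norm_num) (by linarith)]
          nlinarith [hj2]
        refine h0.trans ?_
        gcongr
      have hsplit : ((z + j)^2 - (z - round z)^2) / (2*s)
          = (z + j)^2/(2*s) - (z - round z)^2/(2*s) := by ring
      rw [hsplit] at hdiff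
      have e1 : -(z + (j:ℝ))^2/(2*s) = -((z + (j:ℝ))^2/(2*s)) := by ring
      have e2 : -(z - (round z : ℤ))^2/(2*s) = -((z - (round z : ℤ))^2/(2*s)) := by ring
      rw [e1, e2]
      linarith
    calc heatKernel s (z + j) ≤ _ := hkey
      _ ≤ _ := mul_le_mul_of_nonneg_right (torus_ge' hs hs2 hz) (Real.exp_pos _).le

/-- Uniform `p`-th moment bound for the winding of the heat kernel: for every `p ∈ [1,∞)`
there is `C > 0` such that for all `s ∈ (0,2]` and `x, y ∈ [0,1]`,
`Σ_{j∈ℤ} |j|^p q_s(x+j−y) / G_s(x−y) ≤ C`. -/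
theorem winding_moment_bound (p : ℝ) (hp : 1 ≤ p) :
    ∃ C > (0:ℝ), ∀ s ∈ Set.Ioc (0:ℝ) 2, ∀ x ∈ Set.Icc (0:ℝ) 1, ∀ y ∈ Set.Icc (0:ℝ) 1,
      (∑' j : ℤ, |(j:ℝ)| ^ p * heatKernel s (x + j - y)) / torusHeatKernel s (x - y) ≤ C := by
  have hS : Summable fun j : ℤ => |(j:ℝ)| ^ p * Real.exp (-(((j:ℝ))^2 - 1) / 16) :=
    summable_aux p hp
  set S : ℝ := ∑' j : ℤ, |(j:ℝ)| ^ p * Real.exp (-(((j:ℝ))^2 - 1) / 16) with hSdef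
  have hSpos : 0 < S := by
    have h1 : |((1:ℤ):ℝ)| ^ p * Real.exp (-((((1:ℤ):ℝ))^2 - 1) / 16) ≤ S :=
      Summable.le_tsum hS 1 (fun j _ => by positivity)
    have h0 : (0:ℝ) < |((1:ℤ):ℝ)| ^ p * Real.exp (-((((1:ℤ):ℝ))^2 - 1) / 16) := by
      positivity
    linarith
  refine ⟨S, hSpos, ?_⟩
  rintro s ⟨hs0, hs2⟩ x hx y hy
  obtain ⟨hx1, hx2⟩ := hx
  obtain ⟨hy1, hy2⟩ := hy
  have hz : |x - y| ≤ 1 := by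
    rw [abs_le]
    constructor <;> linarith
  have hrw : ∀ j : ℤ, x + (j:ℝ) - y = (x - y) + j := fun j => by ring
  simp only [hrw]
  have hterm : ∀ j : ℤ, |(j:ℝ)| ^ p * heatKernel s ((x - y) + j) ≤
      torusHeatKernel s (x - y) * (|(j:ℝ)| ^ p * Real.exp (-(((j:ℝ))^2 - 1) / 16)) := by
    intro j
    have h := heat_le hs0 hs2 hz j
    have hnn : (0:ℝ) ≤ |(j:ℝ)| ^ p := Real.rpow_nonneg (abs_nonneg _) p
    calc |(j:ℝ)| ^ p * heatKernel s ((x - y) + j)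
        ≤ |(j:ℝ)| ^ p * (torusHeatKernel s (x - y) * Real.exp (-(((j:ℝ))^2 - 1) / 16)) :=
          mul_le_mul_of_nonneg_left h hnn
      _ = _ := by ring
  have hsum2 : Summable fun j : ℤ =>
      torusHeatKernel s (x - y) * (|(j:ℝ)| ^ p * Real.exp (-(((j:ℝ))^2 - 1) / 16)) :=
    hS.mul_left _
  have hsum1 : Summable fun j : ℤ => |(j:ℝ)| ^ p * heatKernel s ((x - y) + j) :=
    Summable.of_nonneg_of_le
      (fun j => mul_nonneg (Real.rpow_nonneg (abs_nonneg _) p) (heatKernel_nonneg hs0 _))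
      hterm hsum2
  have hD : 0 < torusHeatKernel s (x - y) := torus_pos hs0 hs2 hz
  rw [div_le_iff₀ hD]
  calc (∑' j : ℤ, |(j:ℝ)| ^ p * heatKernel s ((x - y) + j))
      ≤ ∑' j : ℤ, torusHeatKernel s (x - y) *
          (|(j:ℝ)| ^ p * Real.exp (-(((j:ℝ))^2 - 1) / 16)) := Summable.tsum_le_tsum hterm hsum1 hsum2
    _ = torusHeatKernel s (x - y) * S := tsum_mul_left
    _ = S * torusHeatKernel s (x - y) := by ring
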